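/- arXiv:2101.05937 — 2 statements merged into one kernel-verified Lean document; each statement's English description precedes it below -/
import Mathlib

section
/- Lemma 5.3, measure estimate: Let p : ℝ → ℝ be a measurable 2π-periodic function with ∫₀^{2π} p(s) ds = 0, let N₁ ≥ 0 satisfy |p(s)| ≤ N₁ for almost every s, and let s₁ ∈ ℝ. Then the Lebesgue measure of the set Λ₁ := {x ∈ [0,π] : p(s₁ − 2x) ≤ N₁/2} satisfies meas Λ₁ ≥ π/3. -/
open MeasureTheory Real

noncomputable section

/-- **Lemma 5.3, measure estimate.** If `p` is `2π`-periodic with zero mean on `[0,2π]` and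
`|p| ≤ N₁` a.e., then for every `s₁` the set `Λ₁ = {x ∈ [0,π] : p(s₁ − 2x) ≤ N₁/2}` has
Lebesgue measure at least `π/3`. -/
theorem kernel_level_set_measure_bound (p : ℝ → ℝ) (hm : Measurable p)
    (hper : Function.Periodic p (2 * π)) (hint : IntegrableOn p (Set.Icc 0 (2 * π)))
    (h0 : ∫ s in (0:ℝ)..(2 * π), p s = 0)
    (N₁ : ℝ) (hN : 0 ≤ N₁) (hbd : ∀ᵐ s : ℝ ∂volume, |p s| ≤ N₁) (s₁ : ℝ) :
    ENNReal.ofReal (π / 3) ≤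
      volume {x ∈ Set.Icc (0:ℝ) π | p (s₁ - 2 * x) ≤ N₁ / 2} := by
  set q : ℝ → ℝ := fun x => p (s₁ - 2 * x) with hq_def
  have hqm : Measurable q := hm.comp (measurable_const.sub (measurable_const.mul measurable_id))
  -- the affine map is quasi measure preserving
  have hqmp : Measure.QuasiMeasurePreserving (fun x : ℝ => s₁ - 2 * x) volume volume := by
    have h1 : Measure.QuasiMeasurePreserving (fun x : ℝ => (2:ℝ) * x) volume volume :=
      ⟨measurable_const_mul 2, by
        rw [Real.map_volume_mul_left (two_ne_zero)]
        exact Measure.smul_absolutelyContinuous⟩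
    have h2 : Measure.QuasiMeasurePreserving (fun y : ℝ => s₁ - y) volume volume :=
      (Measure.measurePreserving_sub_left volume s₁).quasiMeasurePreserving
    exact h2.comp h1
  have hbd' : ∀ᵐ x : ℝ ∂volume, |q x| ≤ N₁ := hqmp.ae hbd
  -- the set and its complement in [0, π]
  set A : Set ℝ := {x ∈ Set.Icc (0:ℝ) π | q x ≤ N₁ / 2} with hA_def
  have hA : MeasurableSet A :=
    measurableSet_Icc.inter (hqm measurableSet_Iic)
  set B : Set ℝ := Set.Icc (0:ℝ) π \ A with hB_def
  have hB : MeasurableSet B := measurableSet_Icc.diff hA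
  have hAsub : A ⊆ Set.Icc (0:ℝ) π := fun x hx => hx.1
  have hBsub : B ⊆ Set.Icc (0:ℝ) π := fun x hx => hx.1
  have hπ : (0:ℝ) < π := Real.pi_pos
  rcases eq_or_lt_of_le hN with hN0 | hNpos
  · -- N₁ = 0 : then q ≤ 0 a.e., so A has full measure in [0, π]
    have hle : Set.Icc (0:ℝ) π ≤ᵐ[volume] A := by
      filter_upwards [hbd'] with x hx hxI
      exact ⟨hxI, by rw [← hN0]; nlinarith [abs_nonneg (q x), le_abs_self (q x)]⟩
    calc ENNReal.ofReal (π / 3) ≤ ENNReal.ofReal π := by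
          exact ENNReal.ofReal_le_ofReal (by linarith)
      _ = volume (Set.Icc (0:ℝ) π) := by rw [Real.volume_Icc]; norm_num
      _ ≤ volume A := measure_mono_ae hle
  · -- N₁ > 0 : integral argument
    -- integrability of q on [0, π]
    have hqint : IntegrableOn q (Set.Icc 0 π) volume := by
      refine Integrable.mono' (integrable_const N₁)
        (hqm.aestronglyMeasurable.restrict) ?_
      exact ae_restrict_of_ae (hbd'.mono fun x hx => by simpa using hx)
    have hqint' : IntegrableOn (fun x => q x + N₁) (Set.Icc 0 π) volume :=
      hqint.add (integrable_const N₁)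
    -- the integral of q over [0, π] is zero
    have hI : ∫ x in Set.Icc (0:ℝ) π, q x = 0 := by
      have h1 : ∫ x in (0:ℝ)..π, q x = 0 := by
        have := intervalIntegral.integral_comp_sub_mul p (two_ne_zero (α := ℝ)) s₁
          (a := 0) (b := π)
        rw [hq_def]
        rw [this]
        have hshift := hper.intervalIntegral_add_eq (s₁ - 2 * π) 0
        simp only [zero_add, sub_add_cancel] at hshift
        have : s₁ - 2 * 0 = s₁ := by ring
        rw [this, hshift, h0, smul_zero]
      rw [MeasureTheory.integral_Icc_eq_integral_Ioc,
        ← intervalIntegral.integral_of_le hπ.le]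
      exact h1
    have hIcc : volume (Set.Icc (0:ℝ) π) = ENNReal.ofReal π := by
      rw [Real.volume_Icc]; norm_num
    have hIccfin : volume (Set.Icc (0:ℝ) π) ≠ ⊤ := by rw [hIcc]; exact ENNReal.ofReal_ne_top
    have hBfin : volume B ≠ ⊤ := fun h =>
      hIccfin (top_le_iff.mp (h ▸ measure_mono hBsub))
    have hAfin : volume A ≠ ⊤ := fun h =>
      hIccfin (top_le_iff.mp (h ▸ measure_mono hAsub))
    -- ∫ over Icc of (q + N₁) = N₁ π
    have hIfull : ∫ x in Set.Icc (0:ℝ) π, (q x + N₁) = N₁ * π := by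
      rw [integral_add hqint (integrable_const N₁), hI, setIntegral_const, zero_add,
        measureReal_def, hIcc, ENNReal.toReal_ofReal hπ.le, smul_eq_mul, mul_comm]
    -- bound below on B
    have hlow : (3 * N₁ / 2) * (volume B).toReal ≤ ∫ x in B, (q x + N₁) := by
      refine setIntegral_ge_of_const_le_real hB hBfin ?_ (hqint'.mono_set hBsub)
      intro x hx
      have hx2 : ¬ q x ≤ N₁ / 2 := fun h => hx.2 ⟨hx.1, h⟩
      push_neg at hx2
      linarith
    -- bound above on B by the full integral
    have hup : ∫ x in B, (q x + N₁) ≤ ∫ x in Set.Icc (0:ℝ) π, (q x + N₁) := by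
      refine setIntegral_mono_set hqint' ?_ (HasSubset.Subset.eventuallyLE hBsub)
      refine ae_restrict_of_ae (hbd'.mono fun x hx => ?_)
      have := neg_abs_le (q x)
      simp only [Pi.zero_apply]
      linarith
    have hBle : (volume B).toReal ≤ 2 * π / 3 := by
      have h := hlow.trans (hup.trans_eq hIfull)
      nlinarith
    -- combine
    have hsum : volume A + volume B = ENNReal.ofReal π := by
      rw [← hIcc, ← measure_union (Set.disjoint_sdiff_right) hB]
      congr 1
      rw [Set.union_diff_cancel hAsub]
    have hBle' : volume B ≤ ENNReal.ofReal (2 * π / 3) := by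
      rw [← ENNReal.ofReal_toReal hBfin]
      exact ENNReal.ofReal_le_ofReal hBle
    have hsplit : ENNReal.ofReal π = ENNReal.ofReal (π / 3) + ENNReal.ofReal (2 * π / 3) := by
      rw [← ENNReal.ofReal_add (by linarith) (by linarith)]
      congr 1; ring
    have : ENNReal.ofReal (π / 3) + volume B ≤ volume A + volume B := by
      calc ENNReal.ofReal (π / 3) + volume B
          ≤ ENNReal.ofReal (π / 3) + ENNReal.ofReal (2 * π / 3) := by
            exact add_le_add_right hBle' _
        _ = ENNReal.ofReal π := hsplit.symm
        _ = volume A + volume B := hsum.symm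
    exact ENNReal.le_of_add_le_add_right hBfin this
end
end

section
/- Measure estimate of Section 6: Let p̂ : ℝ → ℝ be a measurable 2π-periodic function with ∫₀^{2π} p̂(s) ds = 0, let M₁ > 0 satisfy |p̂(s)| ≤ M₁ for almost every s, let h ∈ ℝ with |h| < 1/4, and let s₁ ∈ ℝ be a point with p̂(s₁) > M₁(1 − |h|). Then the Lebesgue measure of the set Σ₁ := {x ∈ [0,π] : p̂(s₁) − p̂(s₁ − 2x) ≥ M₁/2} satisfies meas Σ₁ ≥ (1 − 2|h|)π/(3 − 2|h|) > π/5. -/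
open MeasureTheory Real

noncomputable section

/-- **Measure estimate of Section 6.** If `p̂` is `2π`-periodic with zero mean, `|p̂| ≤ M₁`
a.e., `|h| < 1/4`, and `p̂(s₁) > M₁(1 − |h|)`, then the set
`Σ₁ = {x ∈ [0,π] : p̂(s₁) − p̂(s₁ − 2x) ≥ M₁/2}` has measure at least
`(1 − 2|h|)π/(3 − 2|h|) > π/5`. -/
theorem shifted_level_set_measure_bound (phat : ℝ → ℝ) (hm : Measurable phat)
    (hper : Function.Periodic phat (2 * π)) (hint : IntegrableOn phat (Set.Icc 0 (2 * π)))
    (h0 : ∫ s in (0:ℝ)..(2 * π), phat s = 0)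
    (M₁ : ℝ) (hM : 0 < M₁) (hbd : ∀ᵐ s : ℝ ∂volume, |phat s| ≤ M₁)
    (h : ℝ) (hh : |h| < 1 / 4) (s₁ : ℝ) (hs₁ : M₁ * (1 - |h|) < phat s₁) :
    ENNReal.ofReal ((1 - 2 * |h|) * π / (3 - 2 * |h|)) ≤
        volume {x ∈ Set.Icc (0:ℝ) π | M₁ / 2 ≤ phat s₁ - phat (s₁ - 2 * x)} ∧
      π / 5 < (1 - 2 * |h|) * π / (3 - 2 * |h|) := by
  have hπ : (0:ℝ) < π := Real.pi_pos
  have habs : (0:ℝ) ≤ |h| := abs_nonneg h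
  constructor
  · -- notation
    set F : ℝ → ℝ := fun x => phat (s₁ - 2 * x) with hFdef
    have hFm : Measurable F := hm.comp (by fun_prop)
    set S : Set ℝ := {x ∈ Set.Icc (0:ℝ) π | M₁ / 2 ≤ phat s₁ - phat (s₁ - 2 * x)} with hSdef
    have hSmeas : MeasurableSet S := by
      have : MeasurableSet {x : ℝ | M₁ / 2 ≤ phat s₁ - phat (s₁ - 2 * x)} :=
        measurableSet_le measurable_const (measurable_const.sub hFm)
      exact measurableSet_Icc.inter this
    have hSsub : S ⊆ Set.Icc 0 π := fun x hx => hx.1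
    have hSfin : volume S ≠ ⊤ :=
      (lt_of_le_of_lt (measure_mono hSsub) measure_Icc_lt_top).ne
    -- quasi measure preserving of x ↦ s₁ - 2x
    have hqmp : Measure.QuasiMeasurePreserving (fun x : ℝ => s₁ - 2 * x) volume volume := by
      have h1 : Measure.QuasiMeasurePreserving (fun x : ℝ => (2:ℝ) * x) volume volume := by
        refine ⟨by fun_prop, ?_⟩
        rw [Real.map_volume_mul_left (by norm_num : (2:ℝ) ≠ 0)]
        exact Measure.smul_absolutelyContinuous
      exact ((Measure.measurePreserving_sub_left volume s₁).quasiMeasurePreserving).comp h1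
    have hFbd : ∀ᵐ x : ℝ ∂volume, |F x| ≤ M₁ := hqmp.ae hbd
    -- integrability of F on Icc 0 π
    have hFint : IntegrableOn F (Set.Icc 0 π) := by
      have hc : IntegrableOn (fun _ : ℝ => M₁) (Set.Icc 0 π) volume :=
        integrableOn_const measure_Icc_lt_top.ne
      refine Integrable.mono' hc hFm.aestronglyMeasurable ?_
      filter_upwards [ae_restrict_of_ae hFbd] with x hx
      simpa using hx
    -- the integral of F over [0, π] is zero
    have hzero : ∫ x in Set.Icc (0:ℝ) π, F x = 0 := by
      rw [MeasureTheory.integral_Icc_eq_integral_Ioc,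
        ← intervalIntegral.integral_of_le hπ.le]
      show (∫ x in (0:ℝ)..π, phat (s₁ - 2 * x)) = 0
      rw [intervalIntegral.integral_comp_sub_mul phat two_ne_zero s₁]
      have c2 : (∫ x in (s₁ - 2*π)..(s₁ - 2*0), phat x) = ∫ x in (0:ℝ)..(2*π), phat x := by
        have ht := hper.intervalIntegral_add_eq (s₁ - 2*π) 0
        rw [zero_add] at ht
        rw [← ht]; norm_num
      rw [c2, h0, smul_zero]
    -- split the integral
    set T : Set ℝ := Set.Icc (0:ℝ) π \ S with hTdef
    have hTmeas : MeasurableSet T := measurableSet_Icc.diff hSmeas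
    have hTfin : volume T ≠ ⊤ :=
      (lt_of_le_of_lt (measure_mono Set.diff_subset) measure_Icc_lt_top).ne
    have hsplit : (∫ x in Set.Icc (0:ℝ) π, F x) = (∫ x in S, F x) + ∫ x in T, F x := by
      rw [← MeasureTheory.setIntegral_union (Set.disjoint_sdiff_right) hTmeas
        (hFint.mono_set hSsub) (hFint.mono_set Set.diff_subset),
        Set.union_diff_cancel hSsub]
    -- lower bound on S : F ≥ -M₁ a.e.
    set m : ℝ := (volume S).toReal with hmdef
    have hm0 : 0 ≤ m := ENNReal.toReal_nonneg
    have hSbound : -M₁ * m ≤ ∫ x in S, F x := by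
      have hae : ∀ᵐ x ∂(volume.restrict S), -M₁ ≤ F x := by
        filter_upwards [ae_restrict_of_ae hFbd] with x hx
        linarith [abs_le.mp hx]
      have hconst : IntegrableOn (fun _ : ℝ => -M₁) S volume :=
        integrableOn_const (lt_of_le_of_lt (measure_mono hSsub) measure_Icc_lt_top).ne
      have hmono := MeasureTheory.setIntegral_mono_on_ae (f := fun _ : ℝ => -M₁) (g := F)
        hconst (hFint.mono_set hSsub) hSmeas
        (by filter_upwards [hFbd] with x hx _; linarith [abs_le.mp hx])
      calc -M₁ * m = ∫ _ in S, (-M₁) := by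
            rw [MeasureTheory.setIntegral_const]; simp [hmdef, mul_comm, Measure.real]
        _ ≤ ∫ x in S, F x := hmono
    -- lower bound on T : F > M₁(1/2 - |h|) pointwise
    have hTbound : M₁ * (1/2 - |h|) * (volume T).toReal ≤ ∫ x in T, F x := by
      rw [mul_comm]
      show (volume T).toReal • (M₁ * (1/2 - |h|)) ≤ ∫ x in T, F x
      refine MeasureTheory.setIntegral_ge_of_const_le hTmeas hTfin ?_
        (hFint.mono_set Set.diff_subset)
      intro x hx
      have hx2 : ¬ (M₁ / 2 ≤ phat s₁ - phat (s₁ - 2 * x)) := fun hc => hx.2 ⟨hx.1, hc⟩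
      push_neg at hx2
      have : phat s₁ - M₁ / 2 < F x := by
        simp only [hFdef]; linarith
      nlinarith
    -- measure of T
    have hTm : (volume T).toReal = π - m := by
      have : volume T = volume (Set.Icc (0:ℝ) π) - volume S :=
        measure_diff hSsub hSmeas.nullMeasurableSet hSfin
      rw [this, Real.volume_Icc, ENNReal.toReal_sub_of_le, ENNReal.toReal_ofReal (by linarith)]
      · simp [hmdef]
      · rw [← Real.volume_Icc (a := (0:ℝ)) (b := π)]; exact measure_mono hSsub
      · exact ENNReal.ofReal_ne_top
    -- combine
    have key : (1 - 2 * |h|) * π / (3 - 2 * |h|) ≤ m := by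
      rw [hzero] at hsplit
      rw [hTm] at hTbound
      have h3 : (0:ℝ) < 3 - 2 * |h| := by linarith
      rw [div_le_iff₀ h3]
      nlinarith [hSbound, hTbound]
    calc ENNReal.ofReal ((1 - 2 * |h|) * π / (3 - 2 * |h|)) ≤ ENNReal.ofReal m :=
          ENNReal.ofReal_le_ofReal key
      _ = volume S := by rw [hmdef, ENNReal.ofReal_toReal hSfin]
  · have h3 : (0:ℝ) < 3 - 2 * |h| := by linarith
    rw [div_lt_div_iff₀ (by norm_num) h3]
    nlinarith
end
end
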